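/- For any positive integers K and F, writing K = (m−1)F + κ with m ≥ 1 and 0 < κ ≤ F, we have S(K, F, 1) = m·C(F,2) − C(F−κ,2), i.e., the minimum S of a (K,F,1,S) PDA equals m·F(F−1)/2 − (F−κ)(F−κ−1)/2. -/

import Mathlib

/-!
With one star per column, write `σ j` for the star row of column `j`. Two occurrences of a
label at `(i, j)` and `(i', j')` force `i = σ j'` and `i' = σ j`, so a label occurs at most
twice, and `S ≥ K (F - 1) - D` where `D` counts the labels occurring twice. For rows `a ≠ b`,
the doubled labels whose two columns are starred in rows `a` and `b` form a matching between
those two classes of columns, hence `D ≤ ∑_{a < b} min (c a) (c b)`, where `c a` is the number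
of columns starred in row `a`. Peeling off one layer of `c` at a time shows that this sum is
largest for the balanced `c` with `∑ c = K`. Conversely, labelling the entry in row `i` of
column `q F + r` (starred in row `r`) by `(q, {i, r})` attains the bound.
-/

/-- A `(K, F, Z, S)` placement delivery array: an `F × K` array over `[0,S) ∪ {*}`
(star encoded as `none`) such that each column contains exactly `Z` stars, every
integer in `[0,S)` appears, and any two equal integer entries lie in distinct rows
and distinct columns with stars at the two crossing positions. -/
def IsPDA (K F Z S : ℕ) (P : Fin F → Fin K → Option ℕ) : Prop :=
  (∀ j, (Finset.univ.filter fun i => P i j = none).card = Z) ∧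
  (∀ i j s, P i j = some s → s < S) ∧
  (∀ s, s < S → ∃ i j, P i j = some s) ∧
  (∀ i₁ j₁ i₂ j₂ s, P i₁ j₁ = some s → P i₂ j₂ = some s → (i₁ ≠ i₂ ∨ j₁ ≠ j₂) →
    i₁ ≠ i₂ ∧ j₁ ≠ j₂ ∧ P i₁ j₂ = none ∧ P i₂ j₁ = none)

/-- `minS K F Z` is the minimum `S` for which a `(K, F, Z, S)` PDA exists. -/
noncomputable def minS (K F Z : ℕ) : ℕ :=
  sInf {S | ∃ P : Fin F → Fin K → Option ℕ, IsPDA K F Z S P}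

open Finset

theorem Nat.choose_two_add (a b : ℕ) :
    (a + b).choose 2 = a.choose 2 + b.choose 2 + a * b := by
  induction b with
  | zero => simp
  | succ b ih =>
    rw [← add_assoc, Nat.choose_succ_succ', ih, Nat.choose_succ_succ', Nat.choose_one_right,
      Nat.choose_one_right]
    ring

theorem Nat.two_mul_choose_two (n : ℕ) : 2 * n.choose 2 = n * n - n := by
  rw [Nat.choose_two_right, Nat.mul_div_cancel' (Nat.even_mul_pred_self n).two_dvd, Nat.mul_sub_one]

/-- `∑_{a < b} min (c a) (c b)` for the balanced `c : Fin F → ℕ` with `∑ a, c a = M`. -/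
def balancedMinSum (F M : ℕ) : ℕ := M / F * F.choose 2 + (M % F).choose 2

theorem balancedMinSum_add_choose_two_le {F n : ℕ} (M : ℕ) (hn : n ≤ F) :
    balancedMinSum F M + n.choose 2 ≤ balancedMinSum F (M + n) := by
  rcases Nat.eq_zero_or_pos F with rfl | hF
  · simp [Nat.le_zero.mp hn]
  have hM := Nat.mod_add_div M F
  have hk := Nat.mod_lt M hF
  unfold balancedMinSum
  set q := M / F
  set k := M % F
  by_cases h : k + n < F
  · obtain ⟨hq, hr⟩ := (Nat.div_mod_unique hF).mpr (⟨by omega, h⟩ : k + n + F * q = M + n ∧ _)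
    rw [hq, hr, Nat.choose_two_add]
    omega
  · obtain ⟨hq, hr⟩ := (Nat.div_mod_unique hF).mpr
      (⟨by rw [Nat.mul_succ]; omega, by omega⟩ : k + n - F + F * (q + 1) = M + n ∧ _)
    rw [hq, hr]
    obtain ⟨v, hv⟩ : ∃ v, F = k + v := ⟨F - k, by omega⟩
    obtain ⟨k', hk'⟩ : ∃ k', n = v + k' := ⟨n - v, by omega⟩
    have hF2 : F.choose 2 = k.choose 2 + v.choose 2 + k * v := by rw [hv, Nat.choose_two_add]
    have hn2 : n.choose 2 = v.choose 2 + k'.choose 2 + v * k' := by rw [hk', Nat.choose_two_add]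
    have hvk : v * k' ≤ k * v := by rw [Nat.mul_comm k]; exact Nat.mul_le_mul_left v (by omega)
    rw [show k + n - F = k' by omega, Nat.add_one_mul]
    omega

theorem balancedMinSum_mul_add {F κ : ℕ} (m : ℕ) (hκ : 0 < κ) (hκF : κ ≤ F) :
    balancedMinSum F (m * F + κ) = m * F.choose 2 + κ.choose 2 := by
  have hF : 0 < F := hκ.trans_le hκF
  unfold balancedMinSum
  rcases hκF.lt_or_eq with h | rfl
  · obtain ⟨hq, hr⟩ := (Nat.div_mod_unique hF).mpr (⟨by ring, h⟩ : κ + F * m = m * F + κ ∧ _)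
    rw [hq, hr]
  · rw [← Nat.succ_mul, Nat.mul_div_cancel _ hF, Nat.mul_mod_left]
    simp [Nat.succ_mul]

theorem Finset.offDiag_filter {α : Type*} [DecidableEq α] (s : Finset α) (p : α → Prop)
    [DecidablePred p] : (s.filter p).offDiag = s.offDiag.filter fun x => p x.1 ∧ p x.2 := by
  ext x
  simp only [mem_offDiag, mem_filter]
  tauto

theorem sum_offDiag_min_le_balancedMinSum {ι : Type*} [Fintype ι] [DecidableEq ι] {F : ℕ}
    (hι : Fintype.card ι ≤ F) (c : ι → ℕ) :
    ∑ x ∈ univ.offDiag, min (c x.1) (c x.2) ≤ 2 * balancedMinSum F (∑ i, c i) := by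
  induction h : ∑ i, c i using Nat.strong_induction_on generalizing c with
  | _ M ih =>
  set n := #(univ.filter fun i => c i ≠ 0)
  have hn : n ≤ F := (card_filter_le _ _).trans (card_univ (α := ι) ▸ hι)
  -- Peel off the bottom layer: every positive `c i` drops by one.
  have hpeel : ∑ x ∈ univ.offDiag, min (c x.1) (c x.2)
      = 2 * n.choose 2 + ∑ x ∈ univ.offDiag, min (c x.1 - 1) (c x.2 - 1) := by
    have hmin (a b : ℕ) : min a b = (if a ≠ 0 ∧ b ≠ 0 then 1 else 0) + min (a - 1) (b - 1) := by
      split_ifs <;> omega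
    rw [sum_congr rfl fun x _ => hmin (c x.1) (c x.2), sum_add_distrib, ← card_filter,
      ← offDiag_filter univ (fun i => c i ≠ 0), offDiag_card, Nat.two_mul_choose_two]
  have hsum : ∑ i, (c i - 1) + n = M := by
    simp only [n, ← h, card_filter, ← sum_add_distrib]
    exact sum_congr rfl fun i _ => by split_ifs <;> omega
  rcases Nat.eq_zero_or_pos n with hn0 | hnpos
  · have hc : ∀ i, c i = 0 := by simpa [n] using hn0
    simp [hc]
  have hrest := ih _ (by omega) (fun i => c i - 1) rfl
  have hstep := balancedMinSum_add_choose_two_le (∑ i, (c i - 1)) hn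
  rw [hsum] at hstep
  rw [hpeel]
  omega

section LowerBound

variable {K F Z S : ℕ} {P : Fin F → Fin K → Option ℕ}

theorem IsPDA.exists_star (hP : IsPDA K F 1 S P) :
    ∃ σ : Fin K → Fin F, ∀ i j, P i j = none ↔ i = σ j := by
  choose σ hσ using fun j => card_eq_one.mp (hP.1 j)
  exact ⟨σ, fun i j => by simpa using Finset.ext_iff.mp (hσ j) i⟩

theorem IsPDA.col_eq_of_row_eq (hP : IsPDA K F Z S P) {i j₁ j₂ s}
    (h₁ : P i j₁ = some s) (h₂ : P i j₂ = some s) : j₁ = j₂ := by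
  by_contra h
  exact (hP.2.2.2 i j₁ i j₂ s h₁ h₂ (Or.inr h)).1 rfl

theorem IsPDA.row_eq_star (hP : IsPDA K F Z S P) {σ : Fin K → Fin F}
    (hσ : ∀ i j, P i j = none ↔ i = σ j) {p q : Fin F × Fin K} {s}
    (hp : P p.1 p.2 = some s) (hq : P q.1 q.2 = some s) (hpq : p ≠ q) : p.1 = σ q.2 :=
  (hσ _ _).mp (hP.2.2.2 _ _ _ _ s hp hq (by contrapose! hpq; exact Prod.ext hpq.1 hpq.2)).2.2.1

def labelPositions (P : Fin F → Fin K → Option ℕ) (s : ℕ) : Finset (Fin F × Fin K) :=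
  univ.filter fun p => P p.1 p.2 = some s

theorem mem_labelPositions {s : ℕ} {p : Fin F × Fin K} :
    p ∈ labelPositions P s ↔ P p.1 p.2 = some s := by
  simp [labelPositions]

theorem IsPDA.card_labelPositions_le_two (hP : IsPDA K F 1 S P) (s : ℕ) :
    #(labelPositions P s) ≤ 2 := by
  obtain ⟨σ, hσ⟩ := hP.exists_star
  by_contra! h
  obtain ⟨p, hp, q, hq, r, hr, hpq, hpr, hqr⟩ := two_lt_card.mp h
  rw [mem_labelPositions] at hp hq hr
  have hrow : q.1 = r.1 := (hP.row_eq_star hσ hq hp hpq.symm).trans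
    (hP.row_eq_star hσ hr hp hpr.symm).symm
  exact hqr (Prod.ext hrow (hP.col_eq_of_row_eq hq (hrow ▸ hr)))

theorem card_filter_ne_none {σ : Fin K → Fin F} (hσ : ∀ i j, P i j = none ↔ i = σ j) :
    #(univ.filter fun p : Fin F × Fin K => P p.1 p.2 ≠ none) = K * (F - 1) := by
  have hstars : univ.filter (fun p : Fin F × Fin K => P p.1 p.2 = none)
      = univ.map ⟨fun j => (σ j, j), fun j j' h => (Prod.ext_iff.mp h).2⟩ := by
    ext ⟨i, j⟩
    simp only [mem_filter, mem_univ, true_and, mem_map, hσ]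
    constructor
    · rintro rfl
      exact ⟨j, rfl⟩
    · rintro ⟨a, ha⟩
      cases ha
      rfl
  have := card_filter_add_card_filter_not (s := univ) fun p : Fin F × Fin K => P p.1 p.2 = none
  simp only [hstars, card_map, card_univ, Fintype.card_prod, Fintype.card_fin, ← ne_eq] at this
  rw [Nat.mul_sub_one, Nat.mul_comm F K] at *
  omega

theorem IsPDA.sum_card_labelPositions (hP : IsPDA K F Z S P) :
    ∑ s ∈ range S, #(labelPositions P s)
      = #(univ.filter fun p : Fin F × Fin K => P p.1 p.2 ≠ none) := by
  rw [card_eq_sum_card_fiberwise (f := fun p => (P p.1 p.2).getD 0) (t := range S)]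
  · refine sum_congr rfl fun s _ => congrArg card (Finset.ext fun p => ?_)
    simp only [mem_labelPositions, mem_filter, mem_univ, true_and]
    cases P p.1 p.2 <;> simp
  · intro p hp
    obtain ⟨s, hs⟩ := Option.ne_none_iff_exists'.mp (mem_filter.mp hp).2
    simpa [hs] using hP.2.1 _ _ _ hs

def sameLabelPairs (P : Fin F → Fin K → Option ℕ) (S : ℕ) :
    Finset (Σ _ : ℕ, (Fin F × Fin K) × (Fin F × Fin K)) :=
  (range S).sigma fun s => (labelPositions P s).offDiag

theorem IsPDA.two_mul_le_add_card_sameLabelPairs (hP : IsPDA K F 1 S P) :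
    2 * (K * (F - 1)) ≤ 2 * S + #(sameLabelPairs P S) := by
  obtain ⟨σ, hσ⟩ := hP.exists_star
  have hS : 2 * S = ∑ _s ∈ range S, 2 := by simp [Nat.mul_comm]
  rw [← card_filter_ne_none hσ, ← hP.sum_card_labelPositions, sameLabelPairs, card_sigma,
    mul_sum, hS, ← sum_add_distrib]
  refine sum_le_sum fun s _ => ?_
  -- a label occurring `n ≤ 2` times has `2 n ≤ 2 + n (n - 1)`
  have := hP.card_labelPositions_le_two s
  rw [offDiag_card]
  interval_cases #(labelPositions P s) <;> simp

theorem IsPDA.eq_of_mem_sameLabelPairs (hP : IsPDA K F Z S P) {x y}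
    (hx : x ∈ sameLabelPairs P S) (hy : y ∈ sameLabelPairs P S)
    (hrow₁ : x.2.1.1 = y.2.1.1) (hrow₂ : x.2.2.1 = y.2.2.1)
    (hcol : x.2.1.2 = y.2.1.2 ∨ x.2.2.2 = y.2.2.2) : x = y := by
  obtain ⟨s, p, q⟩ := x
  obtain ⟨t, p', q'⟩ := y
  simp only [sameLabelPairs, mem_sigma, mem_offDiag, mem_labelPositions] at hx hy
  dsimp only at hrow₁ hrow₂ hcol
  rcases hcol with hcol | hcol
  · obtain rfl : p = p' := Prod.ext hrow₁ hcol
    obtain rfl : s = t := Option.some_injective _ (hx.2.1.symm.trans hy.2.1)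
    obtain rfl : q = q' := Prod.ext hrow₂ (hP.col_eq_of_row_eq hx.2.2.1 (hrow₂ ▸ hy.2.2.1))
    rfl
  · obtain rfl : q = q' := Prod.ext hrow₂ hcol
    obtain rfl : s = t := Option.some_injective _ (hx.2.2.1.symm.trans hy.2.2.1)
    obtain rfl : p = p' := Prod.ext hrow₁ (hP.col_eq_of_row_eq hx.2.1 (hrow₁ ▸ hy.2.1))
    rfl

theorem IsPDA.rows_eq_star_of_mem_sameLabelPairs (hP : IsPDA K F Z S P) {σ : Fin K → Fin F}
    (hσ : ∀ i j, P i j = none ↔ i = σ j) {x} (hx : x ∈ sameLabelPairs P S) :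
    x.2.1.1 = σ x.2.2.2 ∧ x.2.2.1 = σ x.2.1.2 := by
  obtain ⟨s, p, q⟩ := x
  simp only [sameLabelPairs, mem_sigma, mem_offDiag, mem_labelPositions] at hx
  exact ⟨hP.row_eq_star hσ hx.2.1 hx.2.2.1 hx.2.2.2,
    hP.row_eq_star hσ hx.2.2.1 hx.2.1 (Ne.symm hx.2.2.2)⟩

/-- Pairs of positions sharing a label, with the first in row `a` and the second in row `b`,
are matched injectively both to the columns with star in row `a` and to those with star in
row `b`. -/
theorem IsPDA.card_filter_sameLabelPairs_le (hP : IsPDA K F Z S P) {σ : Fin K → Fin F}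
    (hσ : ∀ i j, P i j = none ↔ i = σ j) (a b : Fin F) :
    #((sameLabelPairs P S).filter fun x => (x.2.1.1, σ x.2.1.2) = (a, b))
      ≤ min #(univ.filter fun j => σ j = a) #(univ.filter fun j => σ j = b) := by
  have hfib : ∀ x ∈ (sameLabelPairs P S).filter (fun x => (x.2.1.1, σ x.2.1.2) = (a, b)),
      x ∈ sameLabelPairs P S ∧ x.2.1.1 = a ∧ x.2.2.1 = b ∧ σ x.2.2.2 = a ∧ σ x.2.1.2 = b := by
    intro x hx
    obtain ⟨hx, hab⟩ := mem_filter.mp hx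
    obtain ⟨ha, hb⟩ := Prod.ext_iff.mp hab
    obtain ⟨h₁, h₂⟩ := hP.rows_eq_star_of_mem_sameLabelPairs hσ hx
    exact ⟨hx, ha, h₂.trans hb, h₁.symm.trans ha, hb⟩
  refine le_min (card_le_card_of_injOn (fun x => x.2.2.2) ?_ ?_)
    (card_le_card_of_injOn (fun x => x.2.1.2) ?_ ?_)
  · intro x hx
    simpa using (hfib x hx).2.2.2.1
  · intro x hx y hy h
    obtain ⟨hx, hxa, hxb, -⟩ := hfib x hx
    obtain ⟨hy, hya, hyb, -⟩ := hfib y hy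
    exact hP.eq_of_mem_sameLabelPairs hx hy (hxa.trans hya.symm) (hxb.trans hyb.symm) (Or.inr h)
  · intro x hx
    simpa using (hfib x hx).2.2.2.2
  · intro x hx y hy h
    obtain ⟨hx, hxa, hxb, -⟩ := hfib x hx
    obtain ⟨hy, hya, hyb, -⟩ := hfib y hy
    exact hP.eq_of_mem_sameLabelPairs hx hy (hxa.trans hya.symm) (hxb.trans hyb.symm) (Or.inl h)

theorem IsPDA.card_sameLabelPairs_le (hP : IsPDA K F Z S P) {σ : Fin K → Fin F}
    (hσ : ∀ i j, P i j = none ↔ i = σ j) :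
    #(sameLabelPairs P S) ≤ ∑ x ∈ univ.offDiag,
      min #(univ.filter fun j => σ j = x.1) #(univ.filter fun j => σ j = x.2) := by
  rw [card_eq_sum_card_fiberwise (f := fun x => (x.2.1.1, σ x.2.1.2)) (t := univ.offDiag)]
  · exact sum_le_sum fun ab _ => hP.card_filter_sameLabelPairs_le hσ ab.1 ab.2
  · rintro ⟨s, p, q⟩ hx
    simp only [sameLabelPairs, mem_coe, mem_sigma, mem_offDiag, mem_labelPositions] at hx
    simp [← hσ, hx.2.1]

theorem IsPDA.mul_sub_one_le (hP : IsPDA K F 1 S P) : K * (F - 1) ≤ S + balancedMinSum F K := by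
  obtain ⟨σ, hσ⟩ := hP.exists_star
  have hsum : ∑ r, #(univ.filter fun j => σ j = r) = K := by
    rw [← card_eq_sum_card_fiberwise fun j _ => mem_univ (σ j), card_univ, Fintype.card_fin]
  have hmin := sum_offDiag_min_le_balancedMinSum (F := F) (by simp)
    fun r => #(univ.filter fun j => σ j = r)
  rw [hsum] at hmin
  have := hP.two_mul_le_add_card_sameLabelPairs
  have := hP.card_sameLabelPairs_le hσ
  omega

end LowerBound

section LabelledPDA

variable {α : Type*} {K F Z : ℕ}

/-- The conditions of `IsPDA` that do not involve the label range, for labels in any type. -/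
def IsLabelledPDA (K F Z : ℕ) (Q : Fin F → Fin K → Option α) : Prop :=
  (∀ j, (Finset.univ.filter fun i => Q i j = none).card = Z) ∧
  (∀ i₁ j₁ i₂ j₂ a, Q i₁ j₁ = some a → Q i₂ j₂ = some a → (i₁ ≠ i₂ ∨ j₁ ≠ j₂) →
    i₁ ≠ i₂ ∧ j₁ ≠ j₂ ∧ Q i₁ j₂ = none ∧ Q i₂ j₁ = none)

theorem IsLabelledPDA.exists_isPDA {Q : Fin F → Fin K → Option α} (hQ : IsLabelledPDA K F Z Q)
    (L : Finset α) (hL : ∀ a, a ∈ L ↔ ∃ i j, Q i j = some a) :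
    ∃ P, IsPDA K F Z #L P := by
  classical
  let f : α → ℕ := fun a => if h : a ∈ L then L.equivFin ⟨a, h⟩ else 0
  have hf : ∀ a (h : a ∈ L), f a = L.equivFin ⟨a, h⟩ := fun a h => dif_pos h
  have hQL : ∀ {i j a}, Q i j = some a → a ∈ L := fun h => (hL _).mpr ⟨_, _, h⟩
  refine ⟨fun i j => (Q i j).map f, fun j => by simpa using hQ.1 j, ?_, ?_, ?_⟩
  · intro i j s hs
    obtain ⟨a, ha, rfl⟩ := Option.map_eq_some_iff.mp hs
    rw [hf a (hQL ha)]
    exact Fin.isLt _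
  · intro s hs
    set a := L.equivFin.symm ⟨s, hs⟩
    obtain ⟨i, j, hij⟩ := (hL a).mp a.2
    refine ⟨i, j, show (Q i j).map f = some s from ?_⟩
    rw [hij, Option.map_some, hf a a.2]
    simp [a]
  · intro i₁ j₁ i₂ j₂ s h₁ h₂ hne
    obtain ⟨a₁, ha₁, rfl⟩ := Option.map_eq_some_iff.mp h₁
    obtain ⟨a₂, ha₂, hs⟩ := Option.map_eq_some_iff.mp h₂
    rw [hf _ (hQL ha₁), hf _ (hQL ha₂)] at hs
    obtain rfl : a₂ = a₁ := by simpa using L.equivFin.injective (Fin.ext hs)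
    obtain ⟨h₁, h₂, h₃, h₄⟩ := hQ.2 i₁ j₁ i₂ j₂ a₂ ha₁ ha₂ hne
    simp [h₁, h₂, h₃, h₄]

/-- Concatenated copies of the transposed AN PDA with `t = 1`, before relabelling: column `j`
lies in copy `β j`, has its star in row `σ j`, and carries the pair `{i, σ j}` in row `i`. -/
def blockArray (β : Fin K → ℕ) (σ : Fin K → Fin F) :
    Fin F → Fin K → Option (ℕ × Finset (Fin F)) :=
  fun i j => if i = σ j then none else some (β j, {i, σ j})

theorem blockArray_eq_some {β : Fin K → ℕ} {σ : Fin K → Fin F} {i j a} :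
    blockArray β σ i j = some a ↔ i ≠ σ j ∧ a = (β j, {i, σ j}) := by
  unfold blockArray
  split_ifs with h <;> simp [h, eq_comm]

theorem isLabelledPDA_blockArray {β : Fin K → ℕ} {σ : Fin K → Fin F}
    (hβσ : Function.Injective fun j => (β j, σ j)) : IsLabelledPDA K F 1 (blockArray β σ) := by
  refine ⟨fun j => card_eq_one.mpr ⟨σ j, by ext i; simp [blockArray]⟩, ?_⟩
  intro i₁ j₁ i₂ j₂ a h₁ h₂ hne
  obtain ⟨hi₁, rfl⟩ := blockArray_eq_some.mp h₁
  obtain ⟨hi₂, ha⟩ := blockArray_eq_some.mp h₂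
  simp only [Prod.mk.injEq] at ha
  obtain ⟨hβ, hpair⟩ := ha
  have := Set.pair_eq_pair_iff.mp (by rw [← coe_pair, hpair, coe_pair] :
    ({i₁, σ j₁} : Set (Fin F)) = {i₂, σ j₂})
  rcases this with ⟨rfl, hσ⟩ | ⟨h₁₂, h₂₁⟩
  · exact absurd (hβσ (Prod.ext hβ hσ)) (by simpa using hne)
  · refine ⟨fun h => hi₁ (h.trans h₂₁.symm), fun h => hi₁ (by rw [h₁₂, h]), ?_, ?_⟩
    · simp [blockArray, h₁₂]
    · simp [blockArray, ← h₂₁]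

end LabelledPDA

theorem card_filter_powersetCard_two_exists_lt {F κ : ℕ} (hκF : κ ≤ F) :
    #((powersetCard 2 (univ : Finset (Fin F))).filter fun e => ∃ r ∈ e, ((r : Fin F) : ℕ) < κ)
      = F.choose 2 - (F - κ).choose 2 := by
  have hsplit := card_filter_add_card_filter_not (s := powersetCard 2 (univ : Finset (Fin F)))
    fun e => ∃ r ∈ e, ((r : Fin F) : ℕ) < κ
  have hnot : (powersetCard 2 univ).filter (fun e => ¬∃ r ∈ e, ((r : Fin F) : ℕ) < κ)
      = powersetCard 2 (univ.filter fun r : Fin F => ¬(r : ℕ) < κ) := by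
    ext e
    simp only [mem_filter, mem_powersetCard, subset_iff, mem_univ, implies_true, true_and,
      not_exists, not_and]
    tauto
  have hcard : #(univ.filter fun r : Fin F => ¬(r : ℕ) < κ) = F - κ := by
    have := card_filter_add_card_filter_not (s := (univ : Finset (Fin F))) fun r => (r : ℕ) < κ
    rw [Fin.card_filter_val_lt, card_univ, Fintype.card_fin, min_eq_right hκF] at this
    omega
  rw [hnot, card_powersetCard, hcard, card_powersetCard, card_univ, Fintype.card_fin] at hsplit
  omega

/-- The labels of `blockArray` on `m * F + κ` columns when column `q * F + r` is starred in
row `r`. -/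
def blockLabels (F m κ : ℕ) : Finset (ℕ × Finset (Fin F)) :=
  (range (m + 1) ×ˢ powersetCard 2 univ).filter fun a => ∃ r ∈ a.2, a.1 * F + r < m * F + κ

theorem card_blockLabels {F κ : ℕ} (m : ℕ) (hκF : κ ≤ F) :
    #(blockLabels F m κ) = m * F.choose 2 + (F.choose 2 - (F - κ).choose 2) := by
  rw [blockLabels, card_filter, sum_product, sum_range_succ]
  simp only [← card_filter]
  have hfull : ∀ q ∈ range m, (powersetCard 2 (univ : Finset (Fin F))).filter
      (fun e => ∃ r ∈ e, q * F + (r : Fin F) < m * F + κ) = powersetCard 2 univ := by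
    intro q hq
    refine filter_true_of_mem fun e he => ?_
    obtain ⟨r, hr⟩ := card_pos.mp ((mem_powersetCard.mp he).2 ▸ two_pos)
    have : (q + 1) * F ≤ m * F := Nat.mul_le_mul_right F (mem_range.mp hq)
    exact ⟨r, hr, by rw [Nat.add_one_mul] at this; omega⟩
  rw [sum_congr rfl fun q hq => by rw [hfull q hq], sum_const, card_range, card_powersetCard,
    card_univ, Fintype.card_fin, smul_eq_mul, ← card_filter_powersetCard_two_exists_lt hκF]
  congr 2
  exact filter_congr fun e _ => by simp

theorem exists_isPDA_mul_add {F κ : ℕ} (m : ℕ) (hκ : 0 < κ) (hκF : κ ≤ F) :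
    ∃ P, IsPDA (m * F + κ) F 1 (m * F.choose 2 + (F.choose 2 - (F - κ).choose 2)) P := by
  have hF : 0 < F := hκ.trans_le hκF
  let β : Fin (m * F + κ) → ℕ := fun j => j / F
  let σ : Fin (m * F + κ) → Fin F := fun j => ⟨j % F, Nat.mod_lt _ hF⟩
  have hinj : Function.Injective fun j => (β j, σ j) := by
    intro j j' h
    simp only [Prod.mk.injEq, Fin.ext_iff, β, σ] at h
    exact Fin.ext (by rw [← Nat.div_add_mod j F, ← Nat.div_add_mod j' F, h.1, h.2])
  have hcol : ∀ q (r : Fin F), q * F + r < m * F + κ → ∃ j, β j = q ∧ σ j = r := by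
    intro q r h
    obtain ⟨hq, hr⟩ :=
      (Nat.div_mod_unique hF).mpr (⟨by ring, r.2⟩ : (r : ℕ) + F * q = q * F + r ∧ _)
    exact ⟨⟨q * F + r, h⟩, hq, Fin.ext hr⟩
  rw [← card_blockLabels m hκF]
  refine (isLabelledPDA_blockArray hinj).exists_isPDA _ fun ⟨q, e⟩ => ⟨fun h => ?_, fun h => ?_⟩
  · obtain ⟨⟨-, he⟩, r, hr, hlt⟩ := by simpa only [blockLabels, mem_filter, mem_product] using h
    obtain ⟨i, hir, rfl⟩ : ∃ i, i ≠ r ∧ e = {i, r} := by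
      obtain ⟨x, y, hxy, rfl⟩ := card_eq_two.mp (mem_powersetCard.mp he).2
      rcases mem_insert.mp hr with rfl | hr
      · exact ⟨y, hxy.symm, pair_comm _ _⟩
      · exact ⟨x, (mem_singleton.mp hr) ▸ hxy, by rw [mem_singleton.mp hr]⟩
    obtain ⟨j, rfl, rfl⟩ := hcol q r hlt
    exact ⟨i, j, blockArray_eq_some.mpr ⟨hir, rfl⟩⟩
  · obtain ⟨i, j, hij⟩ := h
    obtain ⟨hi, ha⟩ := blockArray_eq_some.mp hij
    simp only [Prod.mk.injEq] at ha
    obtain ⟨rfl, rfl⟩ := ha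
    have hj : (j : ℕ) / F < m + 1 := by
      rw [Nat.div_lt_iff_lt_mul hF, Nat.add_one_mul]; omega
    simp only [blockLabels, mem_filter, mem_product, mem_range, mem_powersetCard, subset_univ,
      true_and]
    refine ⟨⟨hj, card_pair hi⟩, σ j, by simp, ?_⟩
    simp only [β, σ]
    rw [Nat.mul_comm, Nat.div_add_mod]
    exact j.2

theorem mul_add_mul_sub_one_eq_add_balancedMinSum {F κ : ℕ} (m : ℕ) (hκ : 0 < κ) (hκF : κ ≤ F) :
    (m * F + κ) * (F - 1)
      = m * F.choose 2 + (F.choose 2 - (F - κ).choose 2) + balancedMinSum F (m * F + κ) := by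
  rw [balancedMinSum_mul_add m hκ hκF]
  have h₁ : (F - κ).choose 2 ≤ F.choose 2 := Nat.choose_le_choose 2 (Nat.sub_le F κ)
  have h₂ : 1 ≤ F := hκ.trans_le hκF
  qify [h₁, h₂, hκF]
  simp only [Nat.cast_choose_two, Nat.cast_sub hκF]
  ring

theorem stmt17_general (K F m κ : ℕ) (hm : 1 ≤ m) (hκ : 0 < κ) (hκF : κ ≤ F)
    (hK : K = (m - 1) * F + κ) :
    minS K F 1 = m * Nat.choose F 2 - Nat.choose (F - κ) 2 := by
  obtain ⟨m, rfl⟩ : ∃ m', m = m' + 1 := ⟨m - 1, by omega⟩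
  rw [Nat.add_sub_cancel] at hK
  subst hK
  have h : (F - κ).choose 2 ≤ F.choose 2 := Nat.choose_le_choose 2 (Nat.sub_le F κ)
  rw [show (m + 1) * F.choose 2 - (F - κ).choose 2
    = m * F.choose 2 + (F.choose 2 - (F - κ).choose 2) by rw [Nat.add_one_mul]; omega]
  obtain ⟨P, hP⟩ := exists_isPDA_mul_add m hκ hκF
  refine le_antisymm (Nat.sInf_le ⟨P, hP⟩) (le_csInf ⟨_, P, hP⟩ ?_)
  rintro S ⟨Q, hQ⟩
  have := hQ.mul_sub_one_le
  rw [mul_add_mul_sub_one_eq_add_balancedMinSum m hκ hκF] at this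
  omega

/-- for K = (m−1)F + κ with m ≥ 1 and 0 < κ ≤ F,
S(K, F, 1) = m·C(F,2) − C(F−κ,2). -/
theorem stmt17 (K F m κ : ℕ) (hF : 0 < F) (hm : 1 ≤ m) (hκ : 0 < κ) (hκF : κ ≤ F)
    (hK : K = (m - 1) * F + κ) :
    minS K F 1 = m * Nat.choose F 2 - Nat.choose (F - κ) 2 :=
  stmt17_general K F m κ hm hκ hκF hK
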